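/- arXiv:1802.07564 — 2 statements merged into one kernel-verified Lean document; each statement's English description precedes it below -/
import Mathlib

section
/- Let u₁, ..., u_d be independent with densities π^{(i)} and let f: ℝ^d → ℝ be bounded with f(u) = f(clip(u, α, β)) coordinatewise. For i ≠ j, Cov[f(u) ψ̄^{(i)}(u_i), f(u) ψ̄^{(j)}(u_j)] = Cov[f(u) ψ^{(i)}(u_i), f(u) ψ^{(j)}(u_j)], where ψ^{(i)}(u) = ∇_θ log π_θ^{(i)}(u) and ψ̄^{(i)} is the corresponding CAPG score. -/
open MeasureTheory Set

/-- Expectation of `g` under a joint density `dens` on `Fin d → ℝ`. -/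
noncomputable def Ed {d : ℕ} (dens g : (Fin d → ℝ) → ℝ) : ℝ := ∫ u, g u * dens u

/-- Covariance of `g₁` and `g₂` under a joint density `dens` on `Fin d → ℝ`. -/
noncomputable def Covd {d : ℕ} (dens g₁ g₂ : (Fin d → ℝ) → ℝ) : ℝ :=
  Ed dens (fun u => g₁ u * g₂ u) - Ed dens g₁ * Ed dens g₂

/-!
The CAPG score `ψ̄` differs from the score `ψ` only on the tails `u ≤ α` and `u ≥ β`, where it is a
constant `c` with `c · P(tail) = ∫_tail ∂_θ p = ∫_tail ψ p`; so `ψ̄ - ψ` has zero mean on each tail.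
On a tail of coordinate `i` a function `g` that is clip-invariant in `u_i` does not depend on `u_i`,
so by independence `E[g (ψ̄ - ψ)(u_i)]` factors through that one-dimensional mean and vanishes.
With `g = f` this leaves the means unchanged; for the cross moment apply it at `j` with
`g = f² ψ^{(i)}(u_i)` and then at `i` with `g = f² ψ̄^{(j)}(u_j)`, both clip-invariant in the
relevant coordinate because `i ≠ j`.
-/

lemma mul_eq_of_hasDerivAt_log {F : ℝ → ℝ} {F' c θ : ℝ} (hF : HasDerivAt F F' θ)
    (hpos : 0 < F θ) (hc : HasDerivAt (fun t => Real.log (F t)) c θ) : c * F θ = F' := by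
  rw [hc.unique (hF.log hpos.ne'), div_mul_cancel₀ _ hpos.ne']

lemma score_mul_eq_deriv {p : ℝ → ℝ} {p' ψ θ : ℝ} (hnn : ∀ t, 0 ≤ p t)
    (hp' : HasDerivAt p p' θ) (hψ : HasDerivAt (fun t => Real.log (p t)) ψ θ) :
    ψ * p θ = p' := by
  rcases (hnn θ).eq_or_lt with h0 | hpos
  · -- `θ` minimises the nonnegative `p`, so `p' = 0` as well
    have hmin : IsLocalMin p θ := Filter.Eventually.of_forall fun t => h0 ▸ hnn t
    rw [← h0, hmin.hasDerivAt_eq_zero hp', mul_zero]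
  · exact mul_eq_of_hasDerivAt_log hp' hpos hψ

lemma setIntegral_sub_mul_eq_zero {q q' ψ : ℝ → ℝ} {c : ℝ} {s : Set ℝ}
    (hq : IntegrableOn q s) (hψq : ∀ x, ψ x * q x = q' x)
    (hc : c * ∫ x in s, q x = ∫ x in s, q' x) :
    ∫ x in s, (c - ψ x) * q x = 0 := by
  simp_rw [sub_mul]
  by_cases hψq_int : IntegrableOn (fun x => ψ x * q x) s
  · rw [integral_sub (hq.const_mul c) hψq_int, integral_const_mul, hc, sub_eq_zero]
    simp_rw [hψq]
  · refine integral_undef fun h => hψq_int ?_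
    exact ((hq.const_mul c).sub h).congr (ae_of_all _ fun x => by simp only [Pi.sub_apply]; ring)

/-- Differentiating the log of the tail mass under the integral sign gives
`c * ∫ₛ p = ∫ₛ ∂ₜp = ∫ₛ ψ p`. -/
lemma setIntegral_tail_score_eq_zero {p : ℝ → ℝ → ℝ} {p' ψ : ℝ → ℝ} {θ c : ℝ} {s : Set ℝ}
    (hp : IntegrableOn (p θ) s) (hnn : ∀ t x, 0 ≤ p t x)
    (hp' : ∀ x, HasDerivAt (fun t => p t x) (p' x) θ)
    (hψ : ∀ x, HasDerivAt (fun t => Real.log (p t x)) (ψ x) θ)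
    (hswap : HasDerivAt (fun t => ∫ x in s, p t x) (∫ x in s, p' x) θ)
    (hpos : 0 < ∫ x in s, p θ x)
    (hc : HasDerivAt (fun t => Real.log (∫ x in s, p t x)) c θ) :
    ∫ x in s, (c - ψ x) * p θ x = 0 :=
  setIntegral_sub_mul_eq_zero hp
    (fun x => score_mul_eq_deriv (p := (p · x)) (fun t => hnn t x) (hp' x) (hψ x))
    (mul_eq_of_hasDerivAt_log hswap hpos hc)

lemma one_sub_setIntegral_Iic {p : ℝ → ℝ} (hp : ∫ x, p x = 1) (β : ℝ) :
    1 - ∫ x in Iic β, p x = ∫ x in Ici β, p x := by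
  have hint : Integrable p := Integrable.of_integral_ne_zero (by rw [hp]; norm_num)
  rw [← hp, ← intervalIntegral.integral_Iic_add_Ioi hint.integrableOn hint.integrableOn,
    integral_Ici_eq_integral_Ioi]
  ring

section ClipInvariant

variable {ι : Type*} [DecidableEq ι] (α β : ℝ)

def ClipInvariantAt (i : ι) (g : (ι → ℝ) → ℝ) : Prop :=
  (∀ u, u i ≤ α → g u = g (Function.update u i α)) ∧
    (∀ u, β ≤ u i → g u = g (Function.update u i β))

variable {α β}

lemma ClipInvariantAt.mul {i : ι} {g h : (ι → ℝ) → ℝ} (hg : ClipInvariantAt α β i g)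
    (hh : ClipInvariantAt α β i h) : ClipInvariantAt α β i (fun u => g u * h u) :=
  ⟨fun u hu => congrArg₂ (· * ·) (hg.1 u hu) (hh.1 u hu),
    fun u hu => congrArg₂ (· * ·) (hg.2 u hu) (hh.2 u hu)⟩

lemma clipInvariantAt_apply {i j : ι} (hji : j ≠ i) (h : ℝ → ℝ) :
    ClipInvariantAt α β i (fun u => h (u j)) :=
  ⟨fun u _ => congrArg h (Function.update_of_ne hji _ u).symm,
    fun u _ => congrArg h (Function.update_of_ne hji _ u).symm⟩

lemma clipInvariantAt_of_eq_clip (hαβ : α ≤ β) {f : (ι → ℝ) → ℝ}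
    (hclip : ∀ u, f u = f (fun k => max (min (u k) β) α)) (i : ι) :
    ClipInvariantAt α β i f := by
  have hupdate : ∀ u r, max (min r β) α = max (min (u i) β) α →
      f u = f (Function.update u i r) := fun u r hr => by
    rw [hclip u, hclip (Function.update u i r)]
    congr 1
    funext k
    rcases eq_or_ne k i with rfl | hki
    · rw [Function.update_self, hr]
    · rw [Function.update_of_ne hki]
  refine ⟨fun u hu => hupdate u α ?_, fun u hu => hupdate u β ?_⟩
  · rw [min_eq_left hαβ, max_self, min_eq_left (hu.trans hαβ), max_eq_right hu]
  · rw [min_self, max_eq_left hαβ, min_eq_right hu, max_eq_left hαβ]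

end ClipInvariant

noncomputable def capgScore (α β cA cB : ℝ) (ψ : ℝ → ℝ) (x : ℝ) : ℝ :=
  if x ≤ α then cA else if x < β then ψ x else cB

lemma capgScore_eq_add_indicator {α β : ℝ} (hαβ : α < β) (cA cB : ℝ) (ψ : ℝ → ℝ) (x : ℝ) :
    capgScore α β cA cB ψ x =
      ψ x + (Iic α).indicator (fun x => cA - ψ x) x + (Ici β).indicator (fun x => cB - ψ x) x := by
  unfold capgScore
  by_cases hα : x ≤ α
  · have hβ : ¬ β ≤ x := fun h => (hαβ.trans_le h).not_ge hα
    simp [hα, hβ]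
  · by_cases hβ : x < β
    · simp [hα, hβ]
    · simp [hα, hβ, not_lt.1 hβ]

section ProductDensity

variable {n : ℕ} (q : Fin (n + 1) → ℝ → ℝ) (i : Fin (n + 1))

lemma integral_mul_indicator_apply_mul_prod {s : Set ℝ} (hs : MeasurableSet s) (r : ℝ)
    (w : ℝ → ℝ) {g : (Fin (n + 1) → ℝ) → ℝ}
    (hg : ∀ u, u i ∈ s → g u = g (Function.update u i r)) :
    ∫ u, g u * s.indicator w (u i) * ∏ k, q k (u k) =
      (∫ x in s, w x * q i x) *
        ∫ y : Fin n → ℝ, g (i.insertNth r y) * ∏ k, q (i.succAbove k) (y k) := by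
  set G : (Fin n → ℝ) → ℝ := fun y => g (i.insertNth r y) * ∏ k, q (i.succAbove k) (y k)
  have hsplit : ∀ u : Fin (n + 1) → ℝ, g u * s.indicator w (u i) * ∏ k, q k (u k) =
      s.indicator (fun x => w x * q i x) (u i) * G (i.removeNth u) := by
    intro u
    by_cases hu : u i ∈ s
    · simp only [G, indicator_of_mem hu, Fin.insertNth_removeNth, ← hg u hu,
        Fin.prod_univ_succAbove (fun k => q k (u k)) i, Fin.removeNth]
      ring
    · simp [indicator_of_notMem hu]
  simp_rw [hsplit]
  refine ((volume_preserving_piFinSuccAbove (fun _ => ℝ) i).integral_comp'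
    (fun z : ℝ × (Fin n → ℝ) => s.indicator (fun x => w x * q i x) z.1 * G z.2)).trans ?_
  rw [Measure.volume_eq_prod, integral_prod_mul, integral_indicator hs]

lemma integrable_and_integral_mul_indicator_eq_zero {s : Set ℝ} (hs : MeasurableSet s)
    {r c : ℝ} {ψ : ℝ → ℝ} {g : (Fin (n + 1) → ℝ) → ℝ}
    (hg : ∀ u, u i ∈ s → g u = g (Function.update u i r))
    (hgQ : Integrable (fun u => g u * ∏ k, q k (u k)))
    (hgψQ : Integrable (fun u => g u * ψ (u i) * ∏ k, q k (u k)))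
    (hz : ∫ x in s, (c - ψ x) * q i x = 0) :
    Integrable (fun u => g u * s.indicator (fun x => c - ψ x) (u i) * ∏ k, q k (u k)) ∧
      ∫ u, g u * s.indicator (fun x => c - ψ x) (u i) * ∏ k, q k (u k) = 0 := by
  refine ⟨?_, by rw [integral_mul_indicator_apply_mul_prod q i hs r _ hg, hz, zero_mul]⟩
  refine (((hgQ.const_mul c).sub hgψQ).indicator (measurable_pi_apply i hs)).congr
    (ae_of_all _ fun u => ?_)
  by_cases hu : u i ∈ s
  · simp only [indicator_of_mem (show u ∈ (· i) ⁻¹' s from hu), indicator_of_mem hu,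
      Pi.sub_apply]
    ring
  · simp [indicator_of_notMem (show u ∉ (· i) ⁻¹' s from hu), indicator_of_notMem hu]

lemma integrable_and_integral_mul_capgScore_eq {α β : ℝ} (hαβ : α < β) {cA cB : ℝ}
    {ψ : ℝ → ℝ} {g : (Fin (n + 1) → ℝ) → ℝ} (hg : ClipInvariantAt α β i g)
    (hgQ : Integrable (fun u => g u * ∏ k, q k (u k)))
    (hgψQ : Integrable (fun u => g u * ψ (u i) * ∏ k, q k (u k)))
    (hzA : ∫ x in Iic α, (cA - ψ x) * q i x = 0)
    (hzB : ∫ x in Ici β, (cB - ψ x) * q i x = 0) :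
    Integrable (fun u => g u * capgScore α β cA cB ψ (u i) * ∏ k, q k (u k)) ∧
      ∫ u, g u * capgScore α β cA cB ψ (u i) * ∏ k, q k (u k) =
        ∫ u, g u * ψ (u i) * ∏ k, q k (u k) := by
  obtain ⟨hA, hA0⟩ := integrable_and_integral_mul_indicator_eq_zero q i measurableSet_Iic
    hg.1 hgQ hgψQ hzA
  obtain ⟨hB, hB0⟩ := integrable_and_integral_mul_indicator_eq_zero q i measurableSet_Ici
    hg.2 hgQ hgψQ hzB
  set TA := fun u => g u * (Iic α).indicator (fun x => cA - ψ x) (u i) * ∏ k, q k (u k)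
  set TB := fun u => g u * (Ici β).indicator (fun x => cB - ψ x) (u i) * ∏ k, q k (u k)
  have hsplit : (fun u => g u * capgScore α β cA cB ψ (u i) * ∏ k, q k (u k)) =
      (fun u => g u * ψ (u i) * ∏ k, q k (u k)) + (TA + TB) := by
    funext u
    simp only [TA, TB, Pi.add_apply, capgScore_eq_add_indicator hαβ]
    ring
  rw [hsplit, integral_add' hgψQ (hA.add hB), integral_add' hA hB, hA0, hB0, add_zero, add_zero]
  exact ⟨hgψQ.add (hA.add hB), rfl⟩

end ProductDensity

theorem covd_capgScore_eq {n : ℕ} {q ψ : Fin (n + 1) → ℝ → ℝ} {f : (Fin (n + 1) → ℝ) → ℝ}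
    {α β : ℝ} {cA cB : Fin (n + 1) → ℝ} (hαβ : α < β) {i j : Fin (n + 1)} (hij : i ≠ j)
    (hq : ∀ k, Integrable (q k)) (hf : ∀ k, ClipInvariantAt α β k f)
    (hfmeas : Measurable f) (hfbdd : ∃ M : ℝ, ∀ u, |f u| ≤ M)
    (hzA : ∀ k, ∫ x in Iic α, (cA k - ψ k x) * q k x = 0)
    (hzB : ∀ k, ∫ x in Ici β, (cB k - ψ k x) * q k x = 0)
    (hint : Integrable (fun u => (f u)^2 * ψ i (u i) * ψ j (u j) * ∏ k, q k (u k)))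
    (hint1 : ∀ k, Integrable (fun u => f u * ψ k (u k) * ∏ l, q l (u l))) :
    Covd (fun u => ∏ k, q k (u k))
        (fun u => f u * capgScore α β (cA i) (cB i) (ψ i) (u i))
        (fun u => f u * capgScore α β (cA j) (cB j) (ψ j) (u j)) =
      Covd (fun u => ∏ k, q k (u k)) (fun u => f u * ψ i (u i)) (fun u => f u * ψ j (u j)) := by
  set ψbar := fun k => capgScore α β (cA k) (cB k) (ψ k)
  obtain ⟨M, hM⟩ := hfbdd
  have hf_mul : ∀ {h : (Fin (n + 1) → ℝ) → ℝ}, Integrable h → Integrable (fun u => f u * h u) :=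
    fun hh => hh.bdd_mul hfmeas.aestronglyMeasurable (ae_of_all _ fun u => (hM u : _))
  have hfQ := hf_mul (Integrable.fintype_prod hq)
  obtain ⟨-, mean_i⟩ :=
    integrable_and_integral_mul_capgScore_eq q i hαβ (hf i) hfQ (hint1 i) (hzA i) (hzB i)
  obtain ⟨hj, mean_j⟩ :=
    integrable_and_integral_mul_capgScore_eq q j hαβ (hf j) hfQ (hint1 j) (hzA j) (hzB j)
  obtain ⟨hcross, cross_j⟩ := integrable_and_integral_mul_capgScore_eq q j hαβ
    (g := fun u => f u * f u * ψ i (u i)) (((hf j).mul (hf j)).mul (clipInvariantAt_apply hij _))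
    ((hf_mul (hint1 i)).congr (ae_of_all _ fun u => by ring))
    (hint.congr (ae_of_all _ fun u => by ring)) (hzA j) (hzB j)
  obtain ⟨-, cross_i⟩ := integrable_and_integral_mul_capgScore_eq q i hαβ
    (g := fun u => f u * f u * ψbar j (u j))
    (((hf i).mul (hf i)).mul (clipInvariantAt_apply hij.symm _))
    ((hf_mul hj).congr (ae_of_all _ fun u => by ring))
    (hcross.congr (ae_of_all _ fun u => by ring)) (hzA i) (hzB i)
  simp only [Covd, Ed]
  rw [mean_i, mean_j]
  congr 1
  calc ∫ u, f u * ψbar i (u i) * (f u * ψbar j (u j)) * ∏ k, q k (u k)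
      = ∫ u, f u * f u * ψbar j (u j) * ψbar i (u i) * ∏ k, q k (u k) := by
        congr 1; funext u; ring
    _ = ∫ u, f u * f u * ψ i (u i) * ψbar j (u j) * ∏ k, q k (u k) := by
        rw [cross_i]; congr 1; funext u; ring
    _ = ∫ u, f u * ψ i (u i) * (f u * ψ j (u j)) * ∏ k, q k (u k) := by
        rw [cross_j]; congr 1; funext u; ring

/-- for independent coordinates and clip-invariant `f`, the covariance
cross-terms are unchanged when the per-coordinate scores are replaced by CAPG scores:
`Cov[f ψ̄^{(i)}, f ψ̄^{(j)}] = Cov[f ψ^{(i)}, f ψ^{(j)}]` for `i ≠ j`. -/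
theorem capg_covariance_unchanged
    (d : ℕ)
    (p : Fin d → ℝ → ℝ → ℝ) (p' ψ ψbar : Fin d → ℝ → ℝ) (f : (Fin d → ℝ) → ℝ)
    (θ α β : ℝ) (cA cB : Fin d → ℝ) (hαβ : α < β) (i j : Fin d) (hij : i ≠ j)
    (hpdf : ∀ i t, ∫ u, p i t u = 1) (hnn : ∀ i t u, 0 ≤ p i t u)
    (hp' : ∀ i u, HasDerivAt (fun t => p i t u) (p' i u) θ)
    (hψ : ∀ i u, HasDerivAt (fun t => Real.log (p i t u)) (ψ i u) θ)
    (hswapA : ∀ i, HasDerivAt (fun t => ∫ u in Iic α, p i t u) (∫ u in Iic α, p' i u) θ)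
    (hswapB : ∀ i, HasDerivAt (fun t => ∫ u in Ici β, p i t u) (∫ u in Ici β, p' i u) θ)
    (hposA : ∀ i, 0 < ∫ u in Iic α, p i θ u)
    (hltB : ∀ i, (∫ u in Iic β, p i θ u) < 1)
    (hcA : ∀ i, HasDerivAt (fun t => Real.log (∫ u in Iic α, p i t u)) (cA i) θ)
    (hcB : ∀ i, HasDerivAt (fun t => Real.log (1 - ∫ u in Iic β, p i t u)) (cB i) θ)
    (hψbar : ∀ i u, ψbar i u = if u ≤ α then cA i else if u < β then ψ i u else cB i)
    (hclip : ∀ u : Fin d → ℝ, f u = f (fun i => max (min (u i) β) α))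
    (hfmeas : Measurable f) (hfbdd : ∃ M : ℝ, ∀ u, |f u| ≤ M)
    (hint : Integrable
      (fun u : Fin d → ℝ => (f u)^2 * ψ i (u i) * ψ j (u j) * ∏ k, p k θ (u k)))
    (hint1 : ∀ k : Fin d,
      Integrable (fun u : Fin d → ℝ => f u * ψ k (u k) * ∏ l, p l θ (u l))) :
    Covd (fun u => ∏ k, p k θ (u k))
        (fun u => f u * ψbar i (u i)) (fun u => f u * ψbar j (u j)) =
      Covd (fun u => ∏ k, p k θ (u k))
        (fun u => f u * ψ i (u i)) (fun u => f u * ψ j (u j)) := by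
  obtain ⟨n, rfl⟩ : ∃ n, d = n + 1 := ⟨d - 1, by have := i.pos; omega⟩
  have hp_int : ∀ k t, Integrable (p k t) := fun k t =>
    Integrable.of_integral_ne_zero (by rw [hpdf]; exact one_ne_zero)
  have hzA : ∀ k, ∫ x in Iic α, (cA k - ψ k x) * p k θ x = 0 := fun k =>
    setIntegral_tail_score_eq_zero (hp_int k θ).integrableOn (hnn k) (hp' k) (hψ k)
      (hswapA k) (hposA k) (hcA k)
  have hzB : ∀ k, ∫ x in Ici β, (cB k - ψ k x) * p k θ x = 0 := fun k => by
    have hupper := fun t => one_sub_setIntegral_Iic (hpdf k t) β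
    refine setIntegral_tail_score_eq_zero (hp_int k θ).integrableOn (hnn k) (hp' k) (hψ k)
      (hswapB k) ?_ (by simpa only [hupper] using hcB k)
    linarith [hltB k, hupper θ]
  obtain rfl : ψbar = fun k => capgScore α β (cA k) (cB k) (ψ k) :=
    funext fun k => funext (hψbar k)
  exact covd_capgScore_eq hαβ hij (fun k => hp_int k θ) (clipInvariantAt_of_eq_clip hαβ.le hclip)
    hfmeas hfbdd hzA hzB hint hint1
end

section
/- Let π_θ be a compatible family of PDFs on ℝ that integrates to 1 for all θ and allows exchange of derivative and integral over each of (-∞, α], (α, β), and [β, ∞). Then E_u[ψ̄(u)] = 0, where ψ̄ is the CAPG score: ∇_θ log Π_θ(α) on (-∞, α], ∇_θ log π_θ(u) on (α, β), and ∇_θ log(1-Π_θ(β)) on [β, ∞). -/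
open MeasureTheory Set

/-!
On `(-∞, α]` and `[β, ∞)` the score is a constant `(log P)'`, so it integrates against `p θ`
to `(log P)' · P = P'`, the derivative of the mass `P` of that piece; on `(α, β)` the identity
`ψ · p = p'` does the same. The three derivatives add up to the derivative of the total mass,
which is constantly `1`.
-/

theorem HasDerivAt.eq_mul_of_hasDerivAt_log {f : ℝ → ℝ} {f' c x : ℝ} (hf : HasDerivAt f f' x)
    (hlog : HasDerivAt (fun t => Real.log (f t)) c x) (hx : f x ≠ 0) : f' = c * f x := by
  rw [hlog.unique (hf.log hx)]
  field_simp

open Filter Topology in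
/-- At a zero of a nonnegative `f` both sides vanish: `x` is a local minimum, so `f' = 0`. -/
theorem HasDerivAt.eq_mul_of_hasDerivAt_log_of_nonneg {f : ℝ → ℝ} {f' c x : ℝ}
    (hf : HasDerivAt f f' x) (hlog : HasDerivAt (fun t => Real.log (f t)) c x)
    (hnn : ∀ᶠ t in 𝓝 x, 0 ≤ f t) : f' = c * f x := by
  rcases hnn.self_of_nhds.eq_or_lt with hx | hx
  · have hmin : IsLocalMin f x := hnn.mono fun t ht => hx ▸ ht
    rw [hmin.hasDerivAt_eq_zero hf, ← hx, mul_zero]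
  · exact hf.eq_mul_of_hasDerivAt_log hlog hx.ne'

theorem setIntegral_mul_eq_const_mul {X : Type*} [MeasurableSpace X] {μ : Measure X} {s : Set X}
    (hs : MeasurableSet s) {g h : X → ℝ} {c : ℝ} (hg : ∀ x ∈ s, g x = c) :
    ∫ x in s, g x * h x ∂μ = c * ∫ x in s, h x ∂μ := by
  rw [← integral_const_mul]
  exact setIntegral_congr_fun hs fun x hx => by rw [hg x hx]

section IntervalSplit

variable {E : Type*} [NormedAddCommGroup E] [NormedSpace ℝ E] {μ : Measure ℝ}
  [NullSingletonClass μ] {f : ℝ → E} {a b : ℝ}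

theorem setIntegral_Iic_eq_add_Ioo (hab : a ≤ b) (hf : IntegrableOn f (Iic b) μ) :
    ∫ u in Iic b, f u ∂μ = (∫ u in Iic a, f u ∂μ) + ∫ u in Ioo a b, f u ∂μ := by
  rw [← integral_Ioc_eq_integral_Ioo, ← setIntegral_union (Iic_disjoint_Ioc le_rfl)
    measurableSet_Ioc (hf.mono_set (Iic_subset_Iic.2 hab)) (hf.mono_set Ioc_subset_Iic_self),
    Iic_union_Ioc_eq_Iic hab]

theorem integral_eq_setIntegral_Iic_add_Ici (hf : Integrable f μ) (b : ℝ) :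
    ∫ u, f u ∂μ = (∫ u in Iic b, f u ∂μ) + ∫ u in Ici b, f u ∂μ := by
  rw [integral_Ici_eq_integral_Ioi, intervalIntegral.integral_Iic_add_Ioi hf.integrableOn
    hf.integrableOn]

theorem integral_eq_setIntegral_Iic_add_Ioo_add_Ici (hab : a ≤ b) (hf : Integrable f μ) :
    ∫ u, f u ∂μ = (∫ u in Iic a, f u ∂μ) + (∫ u in Ioo a b, f u ∂μ) + ∫ u in Ici b, f u ∂μ := by
  rw [integral_eq_setIntegral_Iic_add_Ici hf b, setIntegral_Iic_eq_add_Ioo hab hf.integrableOn]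

end IntervalSplit

theorem capg_score_zero_mean_general
    (p : ℝ → ℝ → ℝ) (p' ψ ψbar : ℝ → ℝ) (θ α β cA cB : ℝ) (hαβ : α < β)
    (hpdf : ∀ t, ∫ u, p t u = 1) (hnn : ∀ t u, 0 ≤ p t u)
    (hp' : ∀ u, HasDerivAt (fun t => p t u) (p' u) θ)
    (hψ : ∀ u, HasDerivAt (fun t => Real.log (p t u)) (ψ u) θ)
    (hswapA : HasDerivAt (fun t => ∫ u in Iic α, p t u) (∫ u in Iic α, p' u) θ)
    (hswapM : HasDerivAt (fun t => ∫ u in Ioo α β, p t u) (∫ u in Ioo α β, p' u) θ)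
    (hposA : 0 < ∫ u in Iic α, p θ u)
    (hltB : (∫ u in Iic β, p θ u) < 1)
    (hcA : HasDerivAt (fun t => Real.log (∫ u in Iic α, p t u)) cA θ)
    (hcB : HasDerivAt (fun t => Real.log (1 - ∫ u in Iic β, p t u)) cB θ)
    (hψbar : ∀ u, ψbar u = if u ≤ α then cA else if u < β then ψ u else cB)
    (hint : Integrable (fun u => ψbar u * p θ u)) :
    ∫ u, ψbar u * p θ u = 0 := by
  have hP : ∀ t, Integrable (p t) := fun t => Integrable.of_integral_ne_zero (by simp [hpdf t])
  have hIicβ : ∀ t, ∫ u in Iic β, p t u = (∫ u in Iic α, p t u) + ∫ u in Ioo α β, p t u :=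
    fun t => setIntegral_Iic_eq_add_Ioo hαβ.le (hP t).integrableOn
  have hscoreA : ∫ u in Iic α, p' u = cA * ∫ u in Iic α, p θ u :=
    hswapA.eq_mul_of_hasDerivAt_log hcA hposA.ne'
  have hderivIicβ : HasDerivAt (fun t => ∫ u in Iic β, p t u)
      ((∫ u in Iic α, p' u) + ∫ u in Ioo α β, p' u) θ := by
    rw [funext hIicβ]
    exact hswapA.add hswapM
  have hscoreB : -((∫ u in Iic α, p' u) + ∫ u in Ioo α β, p' u)
      = cB * (1 - ∫ u in Iic β, p θ u) :=
    (hderivIicβ.const_sub 1).eq_mul_of_hasDerivAt_log hcB (sub_ne_zero.2 hltB.ne')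
  have hIci : ∫ u in Ici β, p θ u = 1 - ∫ u in Iic β, p θ u := by
    linarith [integral_eq_setIntegral_Iic_add_Ici (hP θ) β, hpdf θ]
  have hIicα : ∫ u in Iic α, ψbar u * p θ u = cA * ∫ u in Iic α, p θ u :=
    setIntegral_mul_eq_const_mul measurableSet_Iic fun u (hu : u ≤ α) => by simp [hψbar, hu]
  have hIoo : ∫ u in Ioo α β, ψbar u * p θ u = ∫ u in Ioo α β, p' u :=
    setIntegral_congr_fun measurableSet_Ioo fun u hu => by
      rw [hψbar, if_neg (not_le.2 hu.1), if_pos hu.2,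
        (hp' u).eq_mul_of_hasDerivAt_log_of_nonneg (hψ u) (.of_forall (hnn · u))]
  have hIciβ : ∫ u in Ici β, ψbar u * p θ u = cB * ∫ u in Ici β, p θ u :=
    setIntegral_mul_eq_const_mul measurableSet_Ici fun u (hu : β ≤ u) => by
      simp [hψbar, (hαβ.trans_le hu).not_ge, hu.not_gt]
  rw [integral_eq_setIntegral_Iic_add_Ioo_add_Ici hαβ.le hint, hIicα, hIoo, hIciβ, hIci,
    ← hscoreB, ← hscoreA]
  ring

/-- the CAPG score has zero mean: `E_u[ψ̄(u)] = 0`, where `ψ̄` equals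
`∇_θ log Π_θ(α)` on `(-∞, α]`, `∇_θ log p_θ(u)` on `(α, β)`, and
`∇_θ log (1 - Π_θ(β))` on `[β, ∞)`. -/
theorem capg_score_zero_mean
    (p : ℝ → ℝ → ℝ) (p' ψ ψbar : ℝ → ℝ) (θ α β cA cB : ℝ) (hαβ : α < β)
    (hpdf : ∀ t, ∫ u, p t u = 1) (hnn : ∀ t u, 0 ≤ p t u)
    (hp' : ∀ u, HasDerivAt (fun t => p t u) (p' u) θ)
    (hψ : ∀ u, HasDerivAt (fun t => Real.log (p t u)) (ψ u) θ)
    (hswapA : HasDerivAt (fun t => ∫ u in Iic α, p t u) (∫ u in Iic α, p' u) θ)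
    (hswapM : HasDerivAt (fun t => ∫ u in Ioo α β, p t u) (∫ u in Ioo α β, p' u) θ)
    (hswapB : HasDerivAt (fun t => ∫ u in Ici β, p t u) (∫ u in Ici β, p' u) θ)
    (hposA : 0 < ∫ u in Iic α, p θ u)
    (hle : (∫ u in Iic α, p θ u) ≤ ∫ u in Iic β, p θ u)
    (hltB : (∫ u in Iic β, p θ u) < 1)
    (hcA : HasDerivAt (fun t => Real.log (∫ u in Iic α, p t u)) cA θ)
    (hcB : HasDerivAt (fun t => Real.log (1 - ∫ u in Iic β, p t u)) cB θ)
    (hψbar : ∀ u, ψbar u = if u ≤ α then cA else if u < β then ψ u else cB)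
    (hint : Integrable (fun u => ψbar u * p θ u)) :
    ∫ u, ψbar u * p θ u = 0 :=
  capg_score_zero_mean_general p p' ψ ψbar θ α β cA cB hαβ hpdf hnn hp' hψ hswapA hswapM hposA hltB
    hcA hcB hψbar hint
end
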